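/- The restriction of P to the real interval [0,1] is a strictly increasing bijection of [0,1] onto itself; let g : [0,1] → [0,1] denote its inverse. Then for every x ∈ (0,1], the limit Ψ(x) := lim_{N→∞} 2^N ( g^{∘N}(x) − 1 ) exists and is a nonpositive real number, the function Ψ is continuous on (0,1], Ψ(1) = 0, Ψ(P(x)) = 2Ψ(x) for all x ∈ (0,1], and Ψ(x)/(x−1) → 1 as x → 1⁻. -/

import Mathlib

/-!
With `u = 1 - y` and `v = 1 - g y`, the expansion of `P` at its fixed point `1` reads
`u = 2v - v²(5 - v)/4`. Hence the approximants `a_N x = 2^N (g^N x - 1)` decrease in `N`, and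
`|a_{N+1} x - a_N x| ≤ (5/4)(1 - g^{N+1} x) |a_N x|`, where `1 - g^N x` decays geometrically,
uniformly for `x` in `[δ, 1]`. A sequence whose relative increments are uniformly summable
converges uniformly, so `Ψ = lim a_N` exists and is continuous on `(0, 1]`; the same estimate
gives `1 - x ≤ |Ψ x| ≤ (1 - x) exp (K (1 - x))`, hence `Ψ x / (x - 1) → 1`. The functional
equation is the shift `a_{N+1} (P x) = 2 a_N x`.
-/

open Filter

/-- The cubic polynomial `P(x) = (x + 2x² + x³)/4` on the reals. -/
noncomputable def Pr : ℝ → ℝ := fun x => (x + 2 * x ^ 2 + x ^ 3) / 4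

open Set Topology

section MultiplicativelySummable

variable {E : Type*} [NormedAddCommGroup E] {ε : ℕ → ℝ}

theorem norm_le_mul_exp_tsum_of_norm_sub_le {a : ℕ → E} (hε : ∀ n, 0 ≤ ε n) (hsum : Summable ε)
    (ha : ∀ n, ‖a (n + 1) - a n‖ ≤ ε n * ‖a n‖) (n : ℕ) :
    ‖a n‖ ≤ ‖a 0‖ * Real.exp (∑' k, ε k) := by
  have hpartial : ∀ n, ‖a n‖ ≤ ‖a 0‖ * Real.exp (∑ k ∈ Finset.range n, ε k) := by
    intro n
    induction n with
    | zero => simp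
    | succ n ih =>
      calc ‖a (n + 1)‖ ≤ ‖a n‖ + ‖a (n + 1) - a n‖ := norm_le_insert' _ _
        _ ≤ ‖a n‖ * Real.exp (ε n) := by
            nlinarith [ha n, Real.add_one_le_exp (ε n), norm_nonneg (a n)]
        _ ≤ ‖a 0‖ * Real.exp (∑ k ∈ Finset.range n, ε k) * Real.exp (ε n) := by gcongr
        _ = ‖a 0‖ * Real.exp (∑ k ∈ Finset.range (n + 1), ε k) := by
            rw [Finset.sum_range_succ, Real.exp_add, mul_assoc]
  calc ‖a n‖ ≤ ‖a 0‖ * Real.exp (∑ k ∈ Finset.range n, ε k) := hpartial n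
    _ ≤ ‖a 0‖ * Real.exp (∑' k, ε k) := by
        gcongr
        exact hsum.sum_le_tsum _ fun k _ => hε k

theorem exists_tendstoUniformlyOn_of_norm_sub_le [CompleteSpace E] {α : Type*} {a : ℕ → α → E}
    {s : Set α} {B : ℝ} (hε : ∀ n, 0 ≤ ε n) (hsum : Summable ε)
    (ha : ∀ n, ∀ x ∈ s, ‖a (n + 1) x - a n x‖ ≤ ε n * ‖a n x‖) (hB : ∀ x ∈ s, ‖a 0 x‖ ≤ B) :
    ∃ F, TendstoUniformlyOn a F atTop s := by
  set M := B * Real.exp (∑' k, ε k)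
  have hbound : ∀ n, ∀ x ∈ s, ‖a n x‖ ≤ M := fun n x hx =>
    (norm_le_mul_exp_tsum_of_norm_sub_le (a := (a · x)) hε hsum (ha · x hx) n).trans
      (mul_le_mul_of_nonneg_right (hB x hx) (Real.exp_pos _).le)
  have hincr : ∀ n, ∀ x ∈ s, ‖a (n + 1) x - a n x‖ ≤ M * ε n := fun n x hx =>
    (ha n x hx).trans (by rw [mul_comm M]; exact mul_le_mul_of_nonneg_left (hbound n x hx) (hε n))
  have hS := tendstoUniformlyOn_tsum_nat (hsum.mul_left M) hincr
  refine ⟨fun x => a 0 x + ∑' n, (a (n + 1) x - a n x), ?_⟩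
  rw [Metric.tendstoUniformlyOn_iff] at hS ⊢
  intro r hr
  filter_upwards [hS r hr] with N hN x hx
  rw [← add_sub_cancel (a 0 x) (a N x), ← Finset.sum_range_sub (a · x), dist_add_left]
  exact hN x hx

end MultiplicativelySummable

theorem MonotoneOn.continuousOn_of_surjOn {α β : Type*} [LinearOrder α] [TopologicalSpace α]
    [OrderTopology α] [LinearOrder β] [TopologicalSpace β] [OrderTopology β] [DenselyOrdered β]
    {s : Set α} {t : Set β} [s.OrdConnected] [t.OrdConnected] {f : α → β} (hf : MonotoneOn f s)
    (hmaps : MapsTo f s t) (hsurj : SurjOn f s t) :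
    ContinuousOn f s := by
  rw [continuousOn_iff_continuous_domRestrict]
  refine continuous_subtype_val.comp (f := hmaps.restrict) ?_
  refine Monotone.continuous_of_surjective (fun x y hxy => hf x.2 y.2 hxy) fun y => ?_
  obtain ⟨x, hx, hxy⟩ := hsurj y.2
  exact ⟨⟨x, hx⟩, Subtype.ext hxy⟩

theorem continuous_Pr : Continuous Pr := by unfold Pr; fun_prop

theorem Pr_zero : Pr 0 = 0 := by norm_num [Pr]

theorem Pr_one : Pr 1 = 1 := by norm_num [Pr]

theorem one_sub_Pr_one_sub (v : ℝ) : 1 - Pr (1 - v) = 2 * v - v ^ 2 * (5 - v) / 4 := by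
  unfold Pr; ring

theorem strictMonoOn_Pr : StrictMonoOn Pr (Icc 0 1) := by
  intro x hx y _ hxy
  unfold Pr
  nlinarith [hx.1, sq_nonneg (x + y)]

theorem Pr_le_self {x : ℝ} (hx : x ∈ Icc 0 1) : Pr x ≤ x := by
  unfold Pr; nlinarith [mul_nonneg hx.1 (sub_nonneg.2 hx.2)]

theorem Pr_pos {x : ℝ} (hx : 0 < x) : 0 < Pr x := by unfold Pr; positivity

theorem mapsTo_Pr : MapsTo Pr (Icc 0 1) (Icc 0 1) := fun _ hx =>
  ⟨Pr_zero ▸ strictMonoOn_Pr.monotoneOn ⟨le_rfl, zero_le_one⟩ hx hx.1, (Pr_le_self hx).trans hx.2⟩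

theorem bijOn_Pr : BijOn Pr (Icc 0 1) (Icc 0 1) := by
  refine ⟨mapsTo_Pr, strictMonoOn_Pr.injOn, ?_⟩
  have := intermediate_value_Icc zero_le_one continuous_Pr.continuousOn
  rwa [Pr_zero, Pr_one] at this

noncomputable def koenigsApprox (g : ℝ → ℝ) (N : ℕ) (x : ℝ) : ℝ := 2 ^ N * (g^[N] x - 1)

noncomputable def koenigs (g : ℝ → ℝ) (x : ℝ) : ℝ := limUnder atTop (koenigsApprox g · x)

theorem koenigsApprox_zero (g : ℝ → ℝ) (x : ℝ) : koenigsApprox g 0 x = x - 1 := by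
  simp [koenigsApprox]

theorem summable_koenigs_step_bound {δ : ℝ} (hδ : 0 < δ) :
    Summable fun n : ℕ => 5 / 4 * (1 + 3 * δ / 4)⁻¹ ^ (n + 1) :=
  ((summable_nat_add_iff 1).2 (summable_geometric_of_lt_one (by positivity)
    (inv_lt_one_of_one_lt₀ (by linarith)))).mul_left _

theorem koenigsApprox_succ_sub (g : ℝ → ℝ) (x : ℝ) (n : ℕ) :
    koenigsApprox g (n + 1) x - koenigsApprox g n x =
      -(2 ^ n * (2 * (1 - g (g^[n] x)) - (1 - g^[n] x))) := by
  rw [koenigsApprox, koenigsApprox, Function.iterate_succ_apply', pow_succ]; ring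

section InverseBranch

variable {g : ℝ → ℝ} (hg : ∀ x ∈ Icc (0 : ℝ) 1, g x ∈ Icc (0 : ℝ) 1 ∧ Pr (g x) = x)
include hg

theorem g_Pr {y : ℝ} (hy : y ∈ Icc 0 1) : g (Pr y) = y :=
  strictMonoOn_Pr.injOn (hg _ (mapsTo_Pr hy)).1 hy (hg _ (mapsTo_Pr hy)).2

theorem g_one : g 1 = 1 := by
  simpa only [Pr_one] using g_Pr hg (right_mem_Icc.2 zero_le_one)

theorem le_g {y : ℝ} (hy : y ∈ Icc 0 1) : y ≤ g y := by
  conv_lhs => rw [← (hg y hy).2]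
  exact Pr_le_self (hg y hy).1

theorem continuousOn_g : ContinuousOn g (Icc 0 1) := by
  refine MonotoneOn.continuousOn_of_surjOn (fun x hx y hy hxy => ?_) (fun x hx => (hg x hx).1)
    fun y hy => ⟨Pr y, mapsTo_Pr hy, g_Pr hg hy⟩
  rwa [← strictMonoOn_Pr.le_iff_le (hg x hx).1 (hg y hy).1, (hg x hx).2, (hg y hy).2]

theorem mapsTo_g {δ : ℝ} (hδ : 0 ≤ δ) : MapsTo g (Icc δ 1) (Icc δ 1) := fun y hy =>
  have hy' : y ∈ Icc 0 1 := ⟨hδ.trans hy.1, hy.2⟩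
  ⟨hy.1.trans (le_g hg hy'), (hg y hy').1.2⟩

theorem one_sub_eq_poly_one_sub_g {y : ℝ} (hy : y ∈ Icc 0 1) :
    1 - y = 2 * (1 - g y) - (1 - g y) ^ 2 * (5 - (1 - g y)) / 4 := by
  simpa only [sub_sub_cancel, (hg y hy).2] using one_sub_Pr_one_sub (1 - g y)

theorem one_sub_le_two_mul_one_sub_g {y : ℝ} (hy : y ∈ Icc 0 1) : 1 - y ≤ 2 * (1 - g y) := by
  have hv := (hg y hy).1
  nlinarith [one_sub_eq_poly_one_sub_g hg hy, mul_nonneg (sq_nonneg (1 - g y)) (sub_nonneg.2 hv.1)]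

theorem two_mul_one_sub_g_sub_le {y : ℝ} (hy : y ∈ Icc 0 1) :
    2 * (1 - g y) - (1 - y) ≤ 5 / 4 * (1 - g y) * (1 - y) := by
  obtain ⟨hv0, hv1⟩ := (hg y hy).1
  rw [one_sub_eq_poly_one_sub_g hg hy]
  have hg2 : 0 ≤ (1 - g y) ^ 2 * g y := by positivity
  nlinarith [mul_nonneg hg2 hv0, sq_nonneg (1 - g y)]

-- For `v = 1 - g y ≤ 1 - δ` one has `v (5 - v) ≤ (1 - δ)(4 + δ) ≤ 4 - 3δ`, so the expansion
-- `1 - y = 2v - v²(5 - v)/4` gives `1 - y ≥ (1 + 3δ/4) v`.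
theorem one_sub_g_le {δ y : ℝ} (hδ : 0 ≤ δ) (hy : y ∈ Icc δ 1) :
    1 - g y ≤ (1 + 3 * δ / 4)⁻¹ * (1 - y) := by
  have hy' : y ∈ Icc 0 1 := ⟨hδ.trans hy.1, hy.2⟩
  have hv := (hg y hy').1
  have hvy := le_g hg hy'
  rw [inv_mul_eq_div, le_div_iff₀ (by positivity), one_sub_eq_poly_one_sub_g hg hy']
  nlinarith [mul_nonneg (sub_nonneg.2 hv.2) (mul_nonneg (sub_nonneg.2 (hy.1.trans hvy))
    (by linarith [hv.1] : (0 : ℝ) ≤ 4 + δ - (1 - g y))),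
    mul_nonneg (sub_nonneg.2 hv.2) (sq_nonneg δ)]

theorem one_sub_iterate_le {δ x : ℝ} (hδ : 0 ≤ δ) (hx : x ∈ Icc δ 1) (n : ℕ) :
    1 - g^[n] x ≤ (1 + 3 * δ / 4)⁻¹ ^ n * (1 - x) := by
  induction n with
  | zero => simp
  | succ n ih =>
    rw [Function.iterate_succ_apply', pow_succ', mul_assoc]
    exact (one_sub_g_le hg hδ (mapsTo_g hg hδ |>.iterate n hx)).trans (by gcongr)

theorem antitone_koenigsApprox {x : ℝ} (hx : x ∈ Icc 0 1) : Antitone (koenigsApprox g · x) := by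
  refine antitone_nat_of_succ_le fun n => sub_nonpos.1 ?_
  rw [koenigsApprox_succ_sub, neg_nonpos]
  have := one_sub_le_two_mul_one_sub_g hg ((mapsTo_g hg le_rfl).iterate n hx)
  exact mul_nonneg (by positivity) (by linarith)

theorem abs_koenigsApprox_succ_sub_le {δ x : ℝ} (hδ : 0 ≤ δ) (hx : x ∈ Icc δ 1) (n : ℕ) :
    |koenigsApprox g (n + 1) x - koenigsApprox g n x| ≤
      5 / 4 * (1 + 3 * δ / 4)⁻¹ ^ (n + 1) * (1 - x) * |koenigsApprox g n x| := by
  set y := g^[n] x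
  have hyδ : y ∈ Icc δ 1 := (mapsTo_g hg hδ).iterate n hx
  have hy : y ∈ Icc 0 1 := ⟨hδ.trans hyδ.1, hyδ.2⟩
  have hdecay : 1 - g y ≤ (1 + 3 * δ / 4)⁻¹ ^ (n + 1) * (1 - x) := by
    simpa only [y, ← Function.iterate_succ_apply' g n x] using
      one_sub_iterate_le hg hδ hx (n + 1)
  have h2n : (0 : ℝ) < 2 ^ n := by positivity
  have hstep := two_mul_one_sub_g_sub_le hg hy
  have hnonneg := one_sub_le_two_mul_one_sub_g hg hy
  rw [koenigsApprox_succ_sub, abs_neg, koenigsApprox, abs_of_nonneg (by nlinarith),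
    abs_of_nonpos (by nlinarith [hy.2])]
  have hy1 : 0 ≤ 1 - y := by linarith [hy.2]
  calc 2 ^ n * (2 * (1 - g y) - (1 - y)) ≤ 2 ^ n * (5 / 4 * (1 - g y) * (1 - y)) := by gcongr
    _ ≤ 2 ^ n * (5 / 4 * ((1 + 3 * δ / 4)⁻¹ ^ (n + 1) * (1 - x)) * (1 - y)) := by gcongr
    _ = _ := by ring

theorem continuousOn_koenigsApprox (n : ℕ) : ContinuousOn (koenigsApprox g n) (Icc 0 1) :=
  continuousOn_const.mul
    (((continuousOn_g hg).iterate (mapsTo_g hg le_rfl) n).sub continuousOn_const)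

theorem tendstoUniformlyOn_koenigs {δ : ℝ} (hδ : 0 < δ) :
    TendstoUniformlyOn (koenigsApprox g) (koenigs g) atTop (Icc δ 1) := by
  have hstep : ∀ n, ∀ x ∈ Icc δ 1, ‖koenigsApprox g (n + 1) x - koenigsApprox g n x‖ ≤
      5 / 4 * (1 + 3 * δ / 4)⁻¹ ^ (n + 1) * ‖koenigsApprox g n x‖ := fun n x hx => by
    refine (abs_koenigsApprox_succ_sub_le hg hδ.le hx n).trans
      (mul_le_mul_of_nonneg_right (mul_le_of_le_one_right (by positivity) ?_) (abs_nonneg _))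
    linarith [hδ.trans_le hx.1]
  have hstart : ∀ x ∈ Icc δ 1, ‖koenigsApprox g 0 x‖ ≤ 1 := fun x hx => by
    rw [koenigsApprox_zero, Real.norm_eq_abs, abs_of_nonpos (by linarith [hx.2])]
    linarith [hx.1]
  obtain ⟨F, hF⟩ := exists_tendstoUniformlyOn_of_norm_sub_le (fun n => by positivity)
    (summable_koenigs_step_bound hδ) hstep hstart
  exact hF.congr_right fun x hx => (hF.tendsto_at hx).limUnder_eq.symm

theorem tendsto_koenigs {x : ℝ} (hx : x ∈ Ioc 0 1) :
    Tendsto (koenigsApprox g · x) atTop (𝓝 (koenigs g x)) :=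
  (tendstoUniformlyOn_koenigs hg hx.1).tendsto_at ⟨le_rfl, hx.2⟩

theorem koenigs_le_sub_one {x : ℝ} (hx : x ∈ Ioc 0 1) : koenigs g x ≤ x - 1 :=
  koenigsApprox_zero g x ▸
    (antitone_koenigsApprox hg (Ioc_subset_Icc_self hx)).le_of_tendsto (tendsto_koenigs hg hx) 0

theorem continuousOn_koenigs : ContinuousOn (koenigs g) (Ioc 0 1) := by
  intro x hx
  have hδ : 0 < x / 2 := half_pos hx.1
  have hcont : ContinuousOn (koenigs g) (Icc (x / 2) 1) :=
    (tendstoUniformlyOn_koenigs hg hδ).continuousOn <| Frequently.of_forall fun n =>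
      (continuousOn_koenigsApprox hg n).mono (Icc_subset_Icc hδ.le le_rfl)
  refine (hcont x ⟨by linarith [hx.1], hx.2⟩).mono_of_mem_nhdsWithin ?_
  exact mem_nhdsWithin.2
    ⟨Ioi (x / 2), isOpen_Ioi, by simpa using hδ, fun y hy => ⟨hy.1.le, hy.2.2⟩⟩

theorem koenigs_one : koenigs g 1 = 0 := by
  have hconst : (koenigsApprox g · 1) = fun _ => 0 := by
    funext n
    simp [koenigsApprox, Function.iterate_fixed (g_one hg)]
  rw [koenigs, hconst]
  exact tendsto_const_nhds.limUnder_eq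

theorem koenigs_Pr {x : ℝ} (hx : x ∈ Ioc 0 1) : koenigs g (Pr x) = 2 * koenigs g x := by
  have hPx : Pr x ∈ Ioc 0 1 := ⟨Pr_pos hx.1, (mapsTo_Pr (Ioc_subset_Icc_self hx)).2⟩
  have hshift : ∀ n, koenigsApprox g (n + 1) (Pr x) = 2 * koenigsApprox g n x := fun n => by
    rw [koenigsApprox, koenigsApprox, Function.iterate_succ_apply,
      g_Pr hg (Ioc_subset_Icc_self hx), pow_succ]
    ring
  have h := (tendsto_add_atTop_iff_nat 1).2 (tendsto_koenigs hg hPx)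
  simp only [hshift] at h
  exact tendsto_nhds_unique h ((tendsto_koenigs hg hx).const_mul 2)

theorem exists_abs_koenigs_le {δ : ℝ} (hδ : 0 < δ) :
    ∃ K, ∀ x ∈ Icc δ 1, |koenigs g x| ≤ (1 - x) * Real.exp (K * (1 - x)) := by
  refine ⟨∑' n : ℕ, 5 / 4 * (1 + 3 * δ / 4)⁻¹ ^ (n + 1), fun x hx => ?_⟩
  have hx' : x ∈ Ioc 0 1 := ⟨hδ.trans_le hx.1, hx.2⟩
  have hsum := summable_koenigs_step_bound hδ
  have hbound := norm_le_mul_exp_tsum_of_norm_sub_le (a := (koenigsApprox g · x))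
    (fun n => mul_nonneg (by positivity) (by linarith [hx.2])) (hsum.mul_right (1 - x))
    (abs_koenigsApprox_succ_sub_le hg hδ.le hx)
  simp only [Real.norm_eq_abs, koenigsApprox_zero, hsum.tsum_mul_right,
    abs_of_nonpos (by linarith [hx.2] : x - 1 ≤ 0), neg_sub] at hbound
  exact le_of_tendsto' (tendsto_koenigs hg hx').abs hbound

theorem tendsto_koenigs_div_sub_one :
    Tendsto (fun x => koenigs g x / (x - 1)) (𝓝[<] 1) (𝓝 1) := by
  obtain ⟨K, hK⟩ := exists_abs_koenigs_le hg (by norm_num : (0 : ℝ) < 1 / 2)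
  have hupper : Tendsto (fun x : ℝ => Real.exp (K * (1 - x))) (𝓝[<] 1) (𝓝 1) := by
    have : Continuous fun x : ℝ => Real.exp (K * (1 - x)) := by fun_prop
    simpa using (this.tendsto 1).mono_left nhdsWithin_le_nhds
  have hnear : Ioo (1 / 2 : ℝ) 1 ∈ 𝓝[<] (1 : ℝ) := Ioo_mem_nhdsLT (by norm_num)
  refine tendsto_of_tendsto_of_tendsto_of_le_of_le' tendsto_const_nhds hupper ?_ ?_
  · filter_upwards [hnear] with x hx
    rw [le_div_iff_of_neg (by linarith [hx.2]), one_mul]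
    exact koenigs_le_sub_one hg ⟨by linarith [hx.1], hx.2.le⟩
  · filter_upwards [hnear] with x hx
    rw [div_le_iff_of_neg (by linarith [hx.2])]
    have := hK x ⟨hx.1.le, hx.2.le⟩
    linarith [neg_abs_le (koenigs g x)]

end InverseBranch

/-- `P` restricted to `[0,1]` is a strictly increasing bijection of `[0,1]`
onto itself; for its inverse `g`, the limit `Ψ(x) = lim 2^N (g^{∘N}(x) - 1)` exists and is
nonpositive for every `x ∈ (0,1]`, `Ψ` is continuous on `(0,1]`, `Ψ(1) = 0`,
`Ψ(P(x)) = 2Ψ(x)` on `(0,1]`, and `Ψ(x)/(x-1) → 1` as `x → 1⁻`. -/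
theorem stmt10 :
    StrictMonoOn Pr (Set.Icc 0 1) ∧
    Set.BijOn Pr (Set.Icc 0 1) (Set.Icc 0 1) ∧
    ∀ g : ℝ → ℝ,
      (∀ x ∈ Set.Icc (0 : ℝ) 1, g x ∈ Set.Icc (0 : ℝ) 1 ∧ Pr (g x) = x) →
      ∃ Ψ : ℝ → ℝ,
        (∀ x ∈ Set.Ioc (0 : ℝ) 1,
          Tendsto (fun N : ℕ => (2 : ℝ) ^ N * (g^[N] x - 1)) atTop (nhds (Ψ x)) ∧
          Ψ x ≤ 0) ∧
        ContinuousOn Ψ (Set.Ioc 0 1) ∧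
        Ψ 1 = 0 ∧
        (∀ x ∈ Set.Ioc (0 : ℝ) 1, Ψ (Pr x) = 2 * Ψ x) ∧
        Tendsto (fun x => Ψ x / (x - 1)) (nhdsWithin 1 (Set.Iio 1)) (nhds 1) := by
  refine ⟨strictMonoOn_Pr, bijOn_Pr, fun g hg => ⟨koenigs g, fun x hx => ⟨tendsto_koenigs hg hx,
    (koenigs_le_sub_one hg hx).trans (by linarith [hx.2])⟩, continuousOn_koenigs hg,
    koenigs_one hg, fun x hx => koenigs_Pr hg hx, tendsto_koenigs_div_sub_one hg⟩⟩
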